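/- Let V be a smooth vector field on ℝ⁴ which is everywhere a section of the standard Engel distribution, V = a·∂_w + b·(∂_x + z∂_y + w∂_z) for smooth functions a, b. If the Lie bracket of V with every smooth section of E = span(∂_w, ∂_x + z∂_y + w∂_z, ∂_z) is again a section of E, then b ≡ 0; that is, V is everywhere proportional to ∂_w. Conversely, any V = a·∂_w satisfies this bracket condition. -/

import Mathlib

noncomputable def lieBracket (V₁ V₂ : (Fin 4 → ℝ) → (Fin 4 → ℝ)) :
    (Fin 4 → ℝ) → (Fin 4 → ℝ) :=
  fun p => fderiv ℝ V₂ p (V₁ p) - fderiv ℝ V₁ p (V₂ p)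

/-- The even-contact distribution E = [D,D] = ker(dy − z dx). -/
def Eset (p : Fin 4 → ℝ) : Set (Fin 4 → ℝ) := {v | v 1 = p 2 * v 0}

lemma fderiv_apply_comp_proj (V : (Fin 4 → ℝ) → (Fin 4 → ℝ)) (p v : Fin 4 → ℝ) (i : Fin 4)
    (h : DifferentiableAt ℝ V p) :
    fderiv ℝ V p v i = fderiv ℝ (fun q => V q i) p v := by
  have h2 := HasFDerivAt.comp p (ContinuousLinearMap.proj (R := ℝ)
    (φ := fun _ : Fin 4 => ℝ) i).hasFDerivAt h.hasFDerivAt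
  rw [show (fun q => V q i) = (⇑(ContinuousLinearMap.proj (R := ℝ)
    (φ := fun _ : Fin 4 => ℝ) i) ∘ V) from rfl, h2.fderiv]
  rfl

lemma fderiv_coord (p v : Fin 4 → ℝ) (i : Fin 4) :
    fderiv ℝ (fun q : Fin 4 → ℝ => q i) p v = v i := by
  rw [show (fun q : Fin 4 → ℝ => q i) = ⇑(ContinuousLinearMap.proj (R := ℝ)
    (φ := fun _ : Fin 4 => ℝ) i) from rfl, ContinuousLinearMap.fderiv]
  rfl

lemma diffAt_coord (p : Fin 4 → ℝ) (i : Fin 4) :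
    DifferentiableAt ℝ (fun q : Fin 4 → ℝ => q i) p :=
  (ContinuousLinearMap.proj (R := ℝ) (φ := fun _ : Fin 4 => ℝ) i).differentiableAt

/-- A section V = a∂_w + b(∂_x + z∂_y + w∂_z) of D_std preserves E under
Lie bracket iff b ≡ 0; this characterizes ker(D_std) = span(∂_w). -/
theorem kernel_characterization :
    (∀ a b : (Fin 4 → ℝ) → ℝ, ContDiff ℝ (⊤ : ℕ∞) a → ContDiff ℝ (⊤ : ℕ∞) b →
      (∀ S : (Fin 4 → ℝ) → (Fin 4 → ℝ), ContDiff ℝ (⊤ : ℕ∞) S →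
        (∀ p, S p ∈ Eset p) →
        ∀ p, lieBracket
          (fun q => a q • (![0,0,0,1] : Fin 4 → ℝ) + b q • ![1, q 2, q 3, 0])
          S p ∈ Eset p) →
      ∀ p, b p = 0) ∧
    (∀ a : (Fin 4 → ℝ) → ℝ, ContDiff ℝ (⊤ : ℕ∞) a →
      ∀ S : (Fin 4 → ℝ) → (Fin 4 → ℝ), ContDiff ℝ (⊤ : ℕ∞) S →
        (∀ p, S p ∈ Eset p) →
        ∀ p, lieBracket (fun q => a q • (![0,0,0,1] : Fin 4 → ℝ)) S p ∈ Eset p) := by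
  constructor
  · intro a b ha hb h p
    set V : (Fin 4 → ℝ) → (Fin 4 → ℝ) :=
      fun q => a q • (![0,0,0,1] : Fin 4 → ℝ) + b q • ![1, q 2, q 3, 0] with hV
    have hda : ∀ q, DifferentiableAt ℝ a q := fun q => (ha.differentiable (by simp)) q
    have hdb : ∀ q, DifferentiableAt ℝ b q := fun q => (hb.differentiable (by simp)) q
    have hdV : DifferentiableAt ℝ V p := by
      apply DifferentiableAt.add
      · exact (hda p).smul_const _
      · apply DifferentiableAt.smul (hdb p)
        rw [differentiableAt_pi]
        intro i
        fin_cases i <;> simp <;> first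
          | exact differentiableAt_const _
          | exact diffAt_coord p _
    have key := h (fun _ => ![0,0,1,0]) contDiff_const
      (fun q => by simp [Eset]) p
    simp only [lieBracket, Eset, Set.mem_setOf_eq, fderiv_fun_const, Pi.zero_apply,
      ContinuousLinearMap.zero_apply, Pi.sub_apply] at key
    set s : Fin 4 → ℝ := ![0,0,1,0] with hs
    have e0 : fderiv ℝ V p s 0 = fderiv ℝ b p s := by
      rw [fderiv_apply_comp_proj V p s 0 hdV]
      have : (fun q => V q 0) = b := by
        funext q; simp [hV]
      rw [this]
    have e1 : fderiv ℝ V p s 1 = p 2 * fderiv ℝ b p s + b p := by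
      rw [fderiv_apply_comp_proj V p s 1 hdV]
      have : (fun q => V q 1) = fun q => b q * q 2 := by
        funext q; simp [hV]
      rw [this, fderiv_fun_mul (hdb p) (diffAt_coord p 2)]
      simp [fderiv_coord, hs]
      ring
    rw [e0, e1] at key
    linarith
  · intro a ha S hS hsec p
    set V : (Fin 4 → ℝ) → (Fin 4 → ℝ) :=
      fun q => a q • (![0,0,0,1] : Fin 4 → ℝ) with hV
    have hda : ∀ q, DifferentiableAt ℝ a q := fun q => (ha.differentiable (by simp)) q
    have hdV : DifferentiableAt ℝ V p := (hda p).smul_const _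
    have hdS : DifferentiableAt ℝ S p := (hS.differentiable (by simp)) p
    have hdSi : ∀ i, DifferentiableAt ℝ (fun q => S q i) p :=
      differentiableAt_pi.mp hdS
    -- fderiv V p has zero components 0 and 1
    have hV0 : fderiv ℝ V p (S p) 0 = 0 := by
      rw [fderiv_apply_comp_proj V p (S p) 0 hdV]
      have : (fun q => V q 0) = fun _ => (0:ℝ) := by funext q; simp [hV]
      rw [this, fderiv_fun_const]; rfl
    have hV1 : fderiv ℝ V p (S p) 1 = 0 := by
      rw [fderiv_apply_comp_proj V p (S p) 1 hdV]
      have : (fun q => V q 1) = fun _ => (0:ℝ) := by funext q; simp [hV]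
      rw [this, fderiv_fun_const]; rfl
    -- V p has zero component 2
    have hVp2 : V p 2 = 0 := by simp [hV]
    have hS1 : (fun q => S q 1) = fun q => q 2 * S q 0 := by
      funext q; exact hsec q
    have keyS : fderiv ℝ S p (V p) 1 = p 2 * fderiv ℝ S p (V p) 0 := by
      rw [fderiv_apply_comp_proj S p (V p) 1 hdS, fderiv_apply_comp_proj S p (V p) 0 hdS,
        hS1, fderiv_fun_mul (diffAt_coord p 2) (hdSi 0)]
      simp [fderiv_coord, hVp2]
    simp only [lieBracket, Eset, Set.mem_setOf_eq, Pi.sub_apply, hV0, hV1, keyS, sub_zero]
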